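/- arXiv:2009.10533 — 8 statements merged into one kernel-verified Lean document; each statement's English description precedes it below -/
import Mathlib

section
/- Let Ω ⊆ [n₁]×[n₂]×[n₃] and suppose a, b, c are vectors over ℂ (with all components nonzero) satisfying Q_{ijk} = a_i b_j c_k on Ω, where a₁ = b₁ = 1. Suppose the only solution of the homogeneous real linear system x_i + y_j + z_k = 0 for (i,j,k) ∈ Ω with x₁ = y₁ = 0 is the zero solution (condition (A)). Then for any other solution a', b', c' with a'₁ = b'₁ = 1, we have |a'_i| = |a_i|, |b'_j| = |b_j|, |c'_k| = |c_k| for all indices appearing in Ω. -/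
/-!
Taking `log ‖·‖` turns the equalities `a'ᵢ b'ⱼ c'ₖ = Qᵢⱼₖ = aᵢ bⱼ cₖ` into the linear system of
condition (A) for the log-ratios `xᵢ = log ‖a'ᵢ‖ - log ‖aᵢ‖` (and likewise `y`, `z`), normalized by
`x₀ = y₀ = 0`; condition (A) forces these ratios to vanish on `Ω`, and `log` is injective on `(0, ∞)`.
-/

section LogNorm

variable {𝕜 : Type*} [NormedDivisionRing 𝕜]

theorem norm_eq_norm_of_log_norm_sub_eq_zero {u v : 𝕜} (hu : u ≠ 0) (hv : v ≠ 0)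
    (h : Real.log ‖u‖ - Real.log ‖v‖ = 0) : ‖u‖ = ‖v‖ :=
  Real.log_injOn_pos (norm_pos_iff.mpr hu) (norm_pos_iff.mpr hv) (sub_eq_zero.mp h)

theorem log_norm_mul_mul {u v w : 𝕜} (huvw : u * v * w ≠ 0) :
    Real.log ‖u * v * w‖ = Real.log ‖u‖ + Real.log ‖v‖ + Real.log ‖w‖ := by
  obtain ⟨⟨hu, hv⟩, hw⟩ := (mul_ne_zero_iff.mp huvw).imp_left mul_ne_zero_iff.mp
  rw [norm_mul, norm_mul, Real.log_mul (by positivity) (by positivity),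
    Real.log_mul (by positivity) (by positivity)]

theorem log_norm_ratio_add_add_eq_zero {u v w u' v' w' : 𝕜} (h : u * v * w = u' * v' * w')
    (h' : u' * v' * w' ≠ 0) :
    (Real.log ‖u'‖ - Real.log ‖u‖) + (Real.log ‖v'‖ - Real.log ‖v‖)
      + (Real.log ‖w'‖ - Real.log ‖w‖) = 0 := by
  have hlog := log_norm_mul_mul h'
  rw [← h, log_norm_mul_mul (h ▸ h')] at hlog
  linarith

end LogNorm

theorem abs_unique_of_condA_general
    (n₁ n₂ n₃ : ℕ)
    (Ω : Finset (Fin (n₁ + 1) × Fin (n₂ + 1) × Fin (n₃ + 1)))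
    (Q : Fin (n₁ + 1) × Fin (n₂ + 1) × Fin (n₃ + 1) → ℂ)
    (a : Fin (n₁ + 1) → ℂ) (b : Fin (n₂ + 1) → ℂ) (c : Fin (n₃ + 1) → ℂ)
    (ha0 : a 0 = 1) (hb0 : b 0 = 1)
    (hsol : ∀ t ∈ Ω, Q t = a t.1 * b t.2.1 * c t.2.2)
    (hA : ∀ x : Fin (n₁ + 1) → ℝ, ∀ y : Fin (n₂ + 1) → ℝ, ∀ z : Fin (n₃ + 1) → ℝ,
      x 0 = 0 → y 0 = 0 → (∀ t ∈ Ω, x t.1 + y t.2.1 + z t.2.2 = 0) →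
      ∀ t ∈ Ω, x t.1 = 0 ∧ y t.2.1 = 0 ∧ z t.2.2 = 0) :
    ∀ a' : Fin (n₁ + 1) → ℂ, ∀ b' : Fin (n₂ + 1) → ℂ, ∀ c' : Fin (n₃ + 1) → ℂ,
      (∀ t ∈ Ω, a' t.1 ≠ 0 ∧ b' t.2.1 ≠ 0 ∧ c' t.2.2 ≠ 0) →
      a' 0 = 1 → b' 0 = 1 →
      (∀ t ∈ Ω, Q t = a' t.1 * b' t.2.1 * c' t.2.2) →
      ∀ t ∈ Ω, ‖a' t.1‖ = ‖a t.1‖ ∧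
        ‖b' t.2.1‖ = ‖b t.2.1‖ ∧
        ‖c' t.2.2‖ = ‖c t.2.2‖ := by
  intro a' b' c' hnz' ha0' hb0' hsol' t ht
  have hQ : ∀ s ∈ Ω, a s.1 * b s.2.1 * c s.2.2 = a' s.1 * b' s.2.1 * c' s.2.2 :=
    fun s hs => (hsol s hs).symm.trans (hsol' s hs)
  have hprod' : ∀ s ∈ Ω, a' s.1 * b' s.2.1 * c' s.2.2 ≠ 0 := fun s hs => by
    simpa [and_assoc] using hnz' s hs
  have hnz : ∀ s ∈ Ω, a s.1 ≠ 0 ∧ b s.2.1 ≠ 0 ∧ c s.2.2 ≠ 0 := fun s hs => by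
    have h := hprod' s hs
    rw [← hQ s hs] at h
    simpa [and_assoc] using h
  have hratio := hA (fun i => Real.log ‖a' i‖ - Real.log ‖a i‖)
    (fun j => Real.log ‖b' j‖ - Real.log ‖b j‖) (fun k => Real.log ‖c' k‖ - Real.log ‖c k‖)
    (by simp [ha0, ha0']) (by simp [hb0, hb0'])
    (fun s hs => log_norm_ratio_add_add_eq_zero (hQ s hs) (hprod' s hs)) t ht
  obtain ⟨ha, hb, hc⟩ := hnz' t ht
  obtain ⟨ha₀, hb₀, hc₀⟩ := hnz t ht
  exact ⟨norm_eq_norm_of_log_norm_sub_eq_zero ha ha₀ hratio.1,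
    norm_eq_norm_of_log_norm_sub_eq_zero hb hb₀ hratio.2.1,
    norm_eq_norm_of_log_norm_sub_eq_zero hc hc₀ hratio.2.2⟩

/-- Under condition (A), the absolute values of a normalized complex rank-one
completion are uniquely determined on the indices appearing in `Ω`. -/
theorem abs_unique_of_condA
    (n₁ n₂ n₃ : ℕ)
    (Ω : Finset (Fin (n₁ + 1) × Fin (n₂ + 1) × Fin (n₃ + 1)))
    (Q : Fin (n₁ + 1) × Fin (n₂ + 1) × Fin (n₃ + 1) → ℂ)
    (a : Fin (n₁ + 1) → ℂ) (b : Fin (n₂ + 1) → ℂ) (c : Fin (n₃ + 1) → ℂ)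
    (hnz : ∀ t ∈ Ω, a t.1 ≠ 0 ∧ b t.2.1 ≠ 0 ∧ c t.2.2 ≠ 0)
    (ha0 : a 0 = 1) (hb0 : b 0 = 1)
    (hsol : ∀ t ∈ Ω, Q t = a t.1 * b t.2.1 * c t.2.2)
    (hA : ∀ x : Fin (n₁ + 1) → ℝ, ∀ y : Fin (n₂ + 1) → ℝ, ∀ z : Fin (n₃ + 1) → ℝ,
      x 0 = 0 → y 0 = 0 → (∀ t ∈ Ω, x t.1 + y t.2.1 + z t.2.2 = 0) →
      ∀ t ∈ Ω, x t.1 = 0 ∧ y t.2.1 = 0 ∧ z t.2.2 = 0) :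
    ∀ a' : Fin (n₁ + 1) → ℂ, ∀ b' : Fin (n₂ + 1) → ℂ, ∀ c' : Fin (n₃ + 1) → ℂ,
      (∀ t ∈ Ω, a' t.1 ≠ 0 ∧ b' t.2.1 ≠ 0 ∧ c' t.2.2 ≠ 0) →
      a' 0 = 1 → b' 0 = 1 →
      (∀ t ∈ Ω, Q t = a' t.1 * b' t.2.1 * c' t.2.2) →
      ∀ t ∈ Ω, ‖a' t.1‖ = ‖a t.1‖ ∧
        ‖b' t.2.1‖ = ‖b t.2.1‖ ∧
        ‖c' t.2.2‖ = ‖c t.2.2‖ :=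
  abs_unique_of_condA_general n₁ n₂ n₃ Ω Q a b c ha0 hb0 hsol hA
end

section
/- Let Ω ⊆ [n₁]×[n₂]×[n₃] with nonzero real observations Q_{ijk}. Suppose the system |Q_{ijk}| = u_i v_j w_k (u, v, w positive, u₁ = v₁ = 1) has a solution. Define c_{ijk} ∈ GF(2) by c_{ijk} = 0 if Q_{ijk} > 0 and c_{ijk} = 1 if Q_{ijk} < 0. Then a real rank-one completion a_i b_j c_k = Q_{ijk} with a₁ = b₁ = 1 exists if and only if the GF(2) linear system ε_i + ν_j + η_k = c_{ijk}, (i,j,k) ∈ Ω, with ε₁ = ν₁ = 0, has a solution. -/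
/-!
Writing `x = (-1) ^ signBit x * |x|`, the sign bit turns products of nonzero numbers into sums
in GF(2). A real factorization of `Q` therefore yields, after taking sign bits, a solution of
the GF(2) system; conversely, a GF(2) solution attaches signs to the positive factorization of
`|Q|`, and the signs of the products are exactly those of `Q`.
-/

section SignBit

variable {R : Type*} [Ring R] [LinearOrder R] [IsStrictOrderedRing R]

/-- Note that `signBit 0 = 1`. -/
def signBit (x : R) : ZMod 2 := if 0 < x then 0 else 1

@[simp]
lemma signBit_one : signBit (1 : R) = 0 := if_pos one_pos

lemma signBit_mul {x y : R} (hx : x ≠ 0) (hy : y ≠ 0) :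
    signBit (x * y) = signBit x + signBit y := by
  rcases hx.lt_or_gt with hx | hx <;> rcases hy.lt_or_gt with hy | hy
  · simp only [signBit, mul_pos_of_neg_of_neg hx hy, hx.not_gt, hy.not_gt, if_true, if_false]
    decide
  · simp [signBit, mul_neg_of_neg_of_pos hx hy |>.not_gt, hx.not_gt, hy]
  · simp [signBit, mul_neg_of_pos_of_neg hx hy |>.not_gt, hx, hy.not_gt]
  · simp [signBit, mul_pos hx hy, hx, hy]

lemma signBit_mul_mul {x y z : R} (h : x * y * z ≠ 0) :
    signBit (x * y * z) = signBit x + signBit y + signBit z := by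
  have hxy : x * y ≠ 0 := left_ne_zero_of_mul h
  rw [signBit_mul hxy (right_ne_zero_of_mul h), signBit_mul (left_ne_zero_of_mul hxy)
    (right_ne_zero_of_mul hxy)]

end SignBit

section OfSignBit

variable {R : Type*} [Ring R]

def ofSignBit (e : ZMod 2) : R := (-1) ^ e.val

@[simp]
lemma ofSignBit_zero : ofSignBit 0 = (1 : R) := pow_zero _

@[simp]
lemma ofSignBit_one : ofSignBit 1 = (-1 : R) := pow_one _

lemma ofSignBit_add (e f : ZMod 2) : ofSignBit (e + f) = (ofSignBit e * ofSignBit f : R) := by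
  rw [ofSignBit, ZMod.val_add, ← neg_one_pow_eq_pow_mod_two, pow_add, ofSignBit, ofSignBit]

lemma ofSignBit_signBit_mul_abs [LinearOrder R] [IsStrictOrderedRing R] (x : R) :
    ofSignBit (signBit x) * |x| = x := by
  by_cases hx : 0 < x
  · simp [signBit, hx, abs_of_pos hx]
  · simp [signBit, hx, abs_of_nonpos (not_lt.mp hx)]

end OfSignBit

/-- Existence of a real rank-one completion is equivalent to solvability of the
sign system over GF(2), given solvability of the positive-part system. -/
theorem real_completion_iff_gf2_system
    (n₁ n₂ n₃ : ℕ)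
    (Ω : Finset (Fin (n₁ + 1) × Fin (n₂ + 1) × Fin (n₃ + 1)))
    (Q : Fin (n₁ + 1) × Fin (n₂ + 1) × Fin (n₃ + 1) → ℝ)
    (hQ : ∀ t ∈ Ω, Q t ≠ 0)
    (cc : Fin (n₁ + 1) × Fin (n₂ + 1) × Fin (n₃ + 1) → ZMod 2)
    (hcc : ∀ t ∈ Ω, cc t = if 0 < Q t then 0 else 1)
    (hpos : ∃ u : Fin (n₁ + 1) → ℝ, ∃ v : Fin (n₂ + 1) → ℝ, ∃ w : Fin (n₃ + 1) → ℝ,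
      (∀ i, 0 < u i) ∧ (∀ j, 0 < v j) ∧ (∀ k, 0 < w k) ∧
      u 0 = 1 ∧ v 0 = 1 ∧ ∀ t ∈ Ω, |Q t| = u t.1 * v t.2.1 * w t.2.2) :
    (∃ a : Fin (n₁ + 1) → ℝ, ∃ b : Fin (n₂ + 1) → ℝ, ∃ c : Fin (n₃ + 1) → ℝ,
      a 0 = 1 ∧ b 0 = 1 ∧ ∀ t ∈ Ω, Q t = a t.1 * b t.2.1 * c t.2.2) ↔
    (∃ ε : Fin (n₁ + 1) → ZMod 2, ∃ ν : Fin (n₂ + 1) → ZMod 2, ∃ η : Fin (n₃ + 1) → ZMod 2,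
      ε 0 = 0 ∧ ν 0 = 0 ∧ ∀ t ∈ Ω, ε t.1 + ν t.2.1 + η t.2.2 = cc t) := by
  have hcc_signBit : ∀ t ∈ Ω, cc t = signBit (Q t) := hcc
  constructor
  · rintro ⟨a, b, c, ha0, hb0, hfac⟩
    refine ⟨fun i => signBit (a i), fun j => signBit (b j), fun k => signBit (c k), by simp [ha0],
      by simp [hb0], fun t ht => ?_⟩
    have hprod : a t.1 * b t.2.1 * c t.2.2 ≠ 0 := hfac t ht ▸ hQ t ht
    rw [hcc_signBit t ht, hfac t ht, signBit_mul_mul hprod]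
  · rintro ⟨ε, ν, η, hε0, hν0, hsys⟩
    obtain ⟨u, v, w, -, -, -, hu0, hv0, habs⟩ := hpos
    refine ⟨fun i => ofSignBit (ε i) * u i, fun j => ofSignBit (ν j) * v j,
      fun k => ofSignBit (η k) * w k, by simp [hε0, hu0], by simp [hν0, hv0], fun t ht => ?_⟩
    calc Q t = ofSignBit (signBit (Q t)) * |Q t| := (ofSignBit_signBit_mul_abs _).symm
      _ = ofSignBit (ε t.1 + ν t.2.1 + η t.2.2) * (u t.1 * v t.2.1 * w t.2.2) := by
        rw [hsys t ht, hcc_signBit t ht, habs t ht]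
      _ = _ := by rw [ofSignBit_add, ofSignBit_add]; ring
end

section
/- Let Ω ⊆ [n₁]×[n₂]×[n₃] and suppose a, b, c ∈ ℂ with all relevant components nonzero, a₁ = b₁ = 1, satisfy Q_{ijk} = a_i b_j c_k on Ω, and that condition (A) holds. Then the rank-one solution over ℂ is not unique (i.e., there exists another solution a', b', c' with a'₁ = b'₁ = 1 differing from a, b, c on Ω-relevant components) if and only if there exist real numbers α_i, β_j, γ_k ∈ (0, 2π) with α₁ = 0, β₁ = 0 (interpreting indices 1 as excluded from the open-interval requirement) solving α_i + β_j + γ_k = σ_{ijk} for all (i,j,k) ∈ Ω, for some choice σ_{ijk} ∈ {0, 2π, 4π}, such that not all α_i, β_j, γ_k used are multiples of 2π. -/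
/-!
Condition (A), applied to the logarithms of the moduli of the ratios `a'ᵢ / aᵢ`, `b'ⱼ / bⱼ`,
`c'ₖ / cₖ` of two solutions, puts these ratios on the unit circle. Their arguments, taken in
`[0, 2π)`, solve the phase system: on `Ω` the three phases add up to an element of `2πℤ ∩ [0, 6π)`.
Conversely, multiplying `a`, `b`, `c` by `exp (α i * I)`, `exp (β j * I)`, `exp (γ k * I)` for a
solution of the phase system leaves the products `aᵢ bⱼ cₖ` on `Ω` unchanged.
-/

open Real

namespace Complex

theorem exp_ofReal_mul_I_eq_one_iff (θ : ℝ) : exp (θ * I) = 1 ↔ ∃ m : ℤ, θ = 2 * π * m := by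
  rw [← Circle.coe_exp, Circle.coe_eq_one, Circle.exp_eq_one]
  simp only [mul_comm]

theorem mul_exp_ofReal_mul_I_ne_self {w : ℂ} (hw : w ≠ 0) {θ : ℝ}
    (hθ : ¬∃ m : ℤ, θ = 2 * π * m) : w * exp (θ * I) ≠ w :=
  fun h => hθ ((exp_ofReal_mul_I_eq_one_iff θ).1 ((mul_eq_left₀ hw).1 h))

noncomputable def phase (u : ℂ) : ℝ := toIcoMod two_pi_pos 0 u.arg

theorem phase_mem_Ico (u : ℂ) : phase u ∈ Set.Ico 0 (2 * π) := toIcoMod_mem_Ico' _ _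

theorem phase_one : phase 1 = 0 := by
  simp [phase, toIcoMod_apply_left]

theorem exp_phase_mul_I {u : ℂ} (hu : ‖u‖ = 1) : exp (phase u * I) = u := by
  have hperiodic : exp (phase u * I) = exp (u.arg * I) := by
    rw [phase, ← self_sub_toIcoDiv_zsmul]
    push_cast
    exact exp_mul_I_periodic.sub_zsmul_eq _
  rw [hperiodic]
  simpa [hu] using norm_mul_exp_arg_mul_I u

theorem exists_phase_eq_two_pi_mul_iff {u : ℂ} (hu : ‖u‖ = 1) :
    (∃ m : ℤ, phase u = 2 * π * m) ↔ u = 1 := by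
  rw [← exp_ofReal_mul_I_eq_one_iff, exp_phase_mul_I hu]

end Complex

open Complex (exp I)

theorem eq_zero_or_two_pi_or_four_pi {x y z : ℝ} (hx : x ∈ Set.Ico 0 (2 * π))
    (hy : y ∈ Set.Ico 0 (2 * π)) (hz : z ∈ Set.Ico 0 (2 * π)) (h : ∃ m : ℤ, x + y + z = 2 * π * m) :
    x + y + z = 0 ∨ x + y + z = 2 * π ∨ x + y + z = 4 * π := by
  obtain ⟨m, hm⟩ := h
  obtain ⟨hx₀, hx₁⟩ := hx
  obtain ⟨hy₀, hy₁⟩ := hy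
  obtain ⟨hz₀, hz₁⟩ := hz
  have hbounds : (0 : ℝ) ≤ m ∧ (m : ℝ) < 3 := by
    constructor <;> nlinarith [pi_pos]
  have hm_range : 0 ≤ m ∧ m < 3 := by exact_mod_cast hbounds
  obtain ⟨hm₀, hm₃⟩ := hm_range
  rw [hm]
  interval_cases m <;> norm_num
  ring

section RankOne

variable {ι₁ ι₂ ι₃ : Type*} [Zero ι₁] [Zero ι₂] (Ω : Finset (ι₁ × ι₂ × ι₃))

/-- Condition (A). -/
def HasOnlyZeroSolution : Prop :=
  ∀ x : ι₁ → ℝ, ∀ y : ι₂ → ℝ, ∀ z : ι₃ → ℝ,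
    x 0 = 0 → y 0 = 0 → (∀ t ∈ Ω, x t.1 + y t.2.1 + z t.2.2 = 0) →
      ∀ t ∈ Ω, x t.1 = 0 ∧ y t.2.1 = 0 ∧ z t.2.2 = 0

def HasNontrivialPhaseSolution : Prop :=
  ∃ α : ι₁ → ℝ, ∃ β : ι₂ → ℝ, ∃ γ : ι₃ → ℝ, ∃ σ : ι₁ × ι₂ × ι₃ → ℝ,
    α 0 = 0 ∧ β 0 = 0 ∧
    (∀ t ∈ Ω, σ t = 0 ∨ σ t = 2 * π ∨ σ t = 4 * π) ∧
    (∀ t ∈ Ω, α t.1 + β t.2.1 + γ t.2.2 = σ t) ∧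
    (∀ t ∈ Ω, α t.1 ∈ Set.Ico 0 (2 * π) ∧ β t.2.1 ∈ Set.Ico 0 (2 * π) ∧
      γ t.2.2 ∈ Set.Ico 0 (2 * π)) ∧
    (∃ t ∈ Ω, (¬ ∃ m : ℤ, α t.1 = 2 * π * m) ∨ (¬ ∃ m : ℤ, β t.2.1 = 2 * π * m) ∨
      (¬ ∃ m : ℤ, γ t.2.2 = 2 * π * m))

variable {Ω}

theorem HasOnlyZeroSolution.norm_eq_one (hA : HasOnlyZeroSolution Ω) {u : ι₁ → ℂ} {v : ι₂ → ℂ}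
    {w : ι₃ → ℂ} (hu : u 0 = 1) (hv : v 0 = 1) (huvw : ∀ t ∈ Ω, u t.1 * v t.2.1 * w t.2.2 = 1) :
    ∀ t ∈ Ω, ‖u t.1‖ = 1 ∧ ‖v t.2.1‖ = 1 ∧ ‖w t.2.2‖ = 1 := by
  have hpos : ∀ t ∈ Ω, 0 < ‖u t.1‖ ∧ 0 < ‖v t.2.1‖ ∧ 0 < ‖w t.2.2‖ := by
    intro t ht
    have h := huvw t ht
    simp only [norm_pos_iff]
    refine ⟨?_, ?_, ?_⟩ <;> rintro h₀ <;> simp [h₀] at h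
  have hlog := hA (fun i => Real.log ‖u i‖) (fun j => Real.log ‖v j‖) (fun k => Real.log ‖w k‖)
    (by simp [hu]) (by simp [hv]) fun t ht => by
      obtain ⟨h₁, h₂, h₃⟩ := hpos t ht
      rw [← log_mul h₁.ne' h₂.ne', ← log_mul (by positivity) h₃.ne', ← norm_mul, ← norm_mul,
        huvw t ht, norm_one, Real.log_one]
  intro t ht
  obtain ⟨h₁, h₂, h₃⟩ := hpos t ht
  obtain ⟨l₁, l₂, l₃⟩ := hlog t ht
  exact ⟨eq_one_of_pos_of_log_eq_zero h₁ l₁, eq_one_of_pos_of_log_eq_zero h₂ l₂,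
    eq_one_of_pos_of_log_eq_zero h₃ l₃⟩

theorem hasNontrivialPhaseSolution_of_mul_eq_one {u : ι₁ → ℂ} {v : ι₂ → ℂ} {w : ι₃ → ℂ}
    (hu : u 0 = 1) (hv : v 0 = 1)
    (hnorm : ∀ t ∈ Ω, ‖u t.1‖ = 1 ∧ ‖v t.2.1‖ = 1 ∧ ‖w t.2.2‖ = 1)
    (huvw : ∀ t ∈ Ω, u t.1 * v t.2.1 * w t.2.2 = 1)
    (hne : ∃ t ∈ Ω, u t.1 ≠ 1 ∨ v t.2.1 ≠ 1 ∨ w t.2.2 ≠ 1) :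
    HasNontrivialPhaseSolution Ω := by
  refine ⟨fun i => (u i).phase, fun j => (v j).phase, fun k => (w k).phase,
    fun t => (u t.1).phase + (v t.2.1).phase + (w t.2.2).phase,
    by simp [hu, Complex.phase_one], by simp [hv, Complex.phase_one], fun t ht => ?_, fun _ _ => rfl,
    fun _ _ => ⟨Complex.phase_mem_Ico _, Complex.phase_mem_Ico _, Complex.phase_mem_Ico _⟩, ?_⟩
  · obtain ⟨h₁, h₂, h₃⟩ := hnorm t ht
    refine eq_zero_or_two_pi_or_four_pi (Complex.phase_mem_Ico _) (Complex.phase_mem_Ico _) (Complex.phase_mem_Ico _) ?_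
    rw [← Complex.exp_ofReal_mul_I_eq_one_iff]
    push_cast
    rw [add_mul, add_mul, Complex.exp_add, Complex.exp_add, Complex.exp_phase_mul_I h₁, Complex.exp_phase_mul_I h₂,
      Complex.exp_phase_mul_I h₃, huvw t ht]
  · obtain ⟨t, ht, h⟩ := hne
    obtain ⟨h₁, h₂, h₃⟩ := hnorm t ht
    refine ⟨t, ht, ?_⟩
    rwa [Complex.exists_phase_eq_two_pi_mul_iff h₁, Complex.exists_phase_eq_two_pi_mul_iff h₂,
      Complex.exists_phase_eq_two_pi_mul_iff h₃]

theorem HasOnlyZeroSolution.hasNontrivialPhaseSolution (hA : HasOnlyZeroSolution Ω)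
    {a a' : ι₁ → ℂ} {b b' : ι₂ → ℂ} {c c' : ι₃ → ℂ} (ha : a 0 = 1) (hb : b 0 = 1)
    (ha' : a' 0 = 1) (hb' : b' 0 = 1) (hnz : ∀ t ∈ Ω, a t.1 ≠ 0 ∧ b t.2.1 ≠ 0 ∧ c t.2.2 ≠ 0)
    (hprod : ∀ t ∈ Ω, a' t.1 * b' t.2.1 * c' t.2.2 = a t.1 * b t.2.1 * c t.2.2)
    (hne : ∃ t ∈ Ω, a' t.1 ≠ a t.1 ∨ b' t.2.1 ≠ b t.2.1 ∨ c' t.2.2 ≠ c t.2.2) :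
    HasNontrivialPhaseSolution Ω := by
  set u : ι₁ → ℂ := fun i => a' i / a i
  set v : ι₂ → ℂ := fun j => b' j / b j
  set w : ι₃ → ℂ := fun k => c' k / c k
  have hu : u 0 = 1 := by simp [u, ha, ha']
  have hv : v 0 = 1 := by simp [v, hb, hb']
  have huvw : ∀ t ∈ Ω, u t.1 * v t.2.1 * w t.2.2 = 1 := by
    intro t ht
    obtain ⟨h₁, h₂, h₃⟩ := hnz t ht
    rw [div_mul_div_comm, div_mul_div_comm, hprod t ht, div_self (by simp [h₁, h₂, h₃])]
  refine hasNontrivialPhaseSolution_of_mul_eq_one hu hv (hA.norm_eq_one hu hv huvw) huvw ?_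
  obtain ⟨t, ht, h⟩ := hne
  obtain ⟨h₁, h₂, h₃⟩ := hnz t ht
  exact ⟨t, ht, by rwa [Ne, Ne, Ne, div_eq_one_iff_eq h₁, div_eq_one_iff_eq h₂,
    div_eq_one_iff_eq h₃]⟩

theorem HasNontrivialPhaseSolution.exists_ne {a : ι₁ → ℂ} {b : ι₂ → ℂ} {c : ι₃ → ℂ}
    (ha : a 0 = 1) (hb : b 0 = 1) (hnz : ∀ t ∈ Ω, a t.1 ≠ 0 ∧ b t.2.1 ≠ 0 ∧ c t.2.2 ≠ 0)
    (h : HasNontrivialPhaseSolution Ω) :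
    ∃ a' : ι₁ → ℂ, ∃ b' : ι₂ → ℂ, ∃ c' : ι₃ → ℂ, a' 0 = 1 ∧ b' 0 = 1 ∧
      (∀ t ∈ Ω, a' t.1 * b' t.2.1 * c' t.2.2 = a t.1 * b t.2.1 * c t.2.2) ∧
      ∃ t ∈ Ω, a' t.1 ≠ a t.1 ∨ b' t.2.1 ≠ b t.2.1 ∨ c' t.2.2 ≠ c t.2.2 := by
  obtain ⟨α, β, γ, σ, hα, hβ, hσ, hsys, -, t, ht, hnt⟩ := h
  refine ⟨fun i => a i * exp (α i * I), fun j => b j * exp (β j * I),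
    fun k => c k * exp (γ k * I), by simp [ha, hα], by simp [hb, hβ], fun t ht => ?_, t, ht, ?_⟩
  · have hphase : exp ((α t.1 + β t.2.1 + γ t.2.2 : ℝ) * I) = 1 := by
      rw [Complex.exp_ofReal_mul_I_eq_one_iff, hsys t ht]
      rcases hσ t ht with h | h | h
      · exact ⟨0, by simp [h]⟩
      · exact ⟨1, by simp [h]⟩
      · exact ⟨2, by rw [h]; push_cast; ring⟩
    push_cast at hphase
    rw [add_mul, add_mul, Complex.exp_add, Complex.exp_add] at hphase
    linear_combination a t.1 * b t.2.1 * c t.2.2 * hphase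
  · obtain ⟨h₁, h₂, h₃⟩ := hnz t ht
    exact hnt.imp (Complex.mul_exp_ofReal_mul_I_ne_self h₁)
      (Or.imp (Complex.mul_exp_ofReal_mul_I_ne_self h₂) (Complex.mul_exp_ofReal_mul_I_ne_self h₃))

end RankOne

theorem complex_not_unique_iff_phase_system_general
    (n₁ n₂ n₃ : ℕ)
    (Ω : Finset (Fin (n₁ + 1) × Fin (n₂ + 1) × Fin (n₃ + 1)))
    (Q : Fin (n₁ + 1) × Fin (n₂ + 1) × Fin (n₃ + 1) → ℂ)
    (a : Fin (n₁ + 1) → ℂ) (b : Fin (n₂ + 1) → ℂ) (c : Fin (n₃ + 1) → ℂ)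
    (hnz : ∀ t ∈ Ω, a t.1 ≠ 0 ∧ b t.2.1 ≠ 0 ∧ c t.2.2 ≠ 0)
    (ha0 : a 0 = 1) (hb0 : b 0 = 1)
    (hsol : ∀ t ∈ Ω, Q t = a t.1 * b t.2.1 * c t.2.2)
    (hA : ∀ x : Fin (n₁ + 1) → ℝ, ∀ y : Fin (n₂ + 1) → ℝ, ∀ z : Fin (n₃ + 1) → ℝ,
      x 0 = 0 → y 0 = 0 → (∀ t ∈ Ω, x t.1 + y t.2.1 + z t.2.2 = 0) →
      ∀ t ∈ Ω, x t.1 = 0 ∧ y t.2.1 = 0 ∧ z t.2.2 = 0) :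
    (∃ a' : Fin (n₁ + 1) → ℂ, ∃ b' : Fin (n₂ + 1) → ℂ, ∃ c' : Fin (n₃ + 1) → ℂ,
      a' 0 = 1 ∧ b' 0 = 1 ∧
      (∀ t ∈ Ω, Q t = a' t.1 * b' t.2.1 * c' t.2.2) ∧
      (∃ t ∈ Ω, a' t.1 ≠ a t.1 ∨ b' t.2.1 ≠ b t.2.1 ∨ c' t.2.2 ≠ c t.2.2)) ↔
    (∃ α : Fin (n₁ + 1) → ℝ, ∃ β : Fin (n₂ + 1) → ℝ, ∃ γ : Fin (n₃ + 1) → ℝ,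
      ∃ σ : Fin (n₁ + 1) × Fin (n₂ + 1) × Fin (n₃ + 1) → ℝ,
      α 0 = 0 ∧ β 0 = 0 ∧
      (∀ t ∈ Ω, σ t = 0 ∨ σ t = 2 * π ∨ σ t = 4 * π) ∧
      (∀ t ∈ Ω, α t.1 + β t.2.1 + γ t.2.2 = σ t) ∧
      (∀ t ∈ Ω, α t.1 ∈ Set.Ico 0 (2 * π) ∧ β t.2.1 ∈ Set.Ico 0 (2 * π) ∧
        γ t.2.2 ∈ Set.Ico 0 (2 * π)) ∧
      (∃ t ∈ Ω, (¬ ∃ m : ℤ, α t.1 = 2 * π * m) ∨ (¬ ∃ m : ℤ, β t.2.1 = 2 * π * m) ∨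
        (¬ ∃ m : ℤ, γ t.2.2 = 2 * π * m))) := by
  have hA' : HasOnlyZeroSolution Ω := hA
  constructor
  · rintro ⟨a', b', c', ha'0, hb'0, hsol', hne⟩
    exact hA'.hasNontrivialPhaseSolution ha0 hb0 ha'0 hb'0 hnz
      (fun t ht => (hsol' t ht).symm.trans (hsol t ht)) hne
  · intro hphase
    obtain ⟨a', b', c', ha'0, hb'0, hprod, hne⟩ :=
      HasNontrivialPhaseSolution.exists_ne (Ω := Ω) ha0 hb0 hnz hphase
    exact ⟨a', b', c', ha'0, hb'0, fun t ht => (hsol t ht).trans (hprod t ht).symm, hne⟩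

/-- Under condition (A), the complex rank-one solution is not unique iff the
phase system with right-hand sides in `{0, 2π, 4π}` has a nontrivial solution. -/
theorem complex_not_unique_iff_phase_system
    (n₁ n₂ n₃ : ℕ)
    (Ω : Finset (Fin (n₁ + 1) × Fin (n₂ + 1) × Fin (n₃ + 1)))
    (Q : Fin (n₁ + 1) × Fin (n₂ + 1) × Fin (n₃ + 1) → ℂ)
    (hQ : ∀ t ∈ Ω, Q t ≠ 0)
    (a : Fin (n₁ + 1) → ℂ) (b : Fin (n₂ + 1) → ℂ) (c : Fin (n₃ + 1) → ℂ)
    (hnz : ∀ t ∈ Ω, a t.1 ≠ 0 ∧ b t.2.1 ≠ 0 ∧ c t.2.2 ≠ 0)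
    (ha0 : a 0 = 1) (hb0 : b 0 = 1)
    (hsol : ∀ t ∈ Ω, Q t = a t.1 * b t.2.1 * c t.2.2)
    (hA : ∀ x : Fin (n₁ + 1) → ℝ, ∀ y : Fin (n₂ + 1) → ℝ, ∀ z : Fin (n₃ + 1) → ℝ,
      x 0 = 0 → y 0 = 0 → (∀ t ∈ Ω, x t.1 + y t.2.1 + z t.2.2 = 0) →
      ∀ t ∈ Ω, x t.1 = 0 ∧ y t.2.1 = 0 ∧ z t.2.2 = 0) :
    (∃ a' : Fin (n₁ + 1) → ℂ, ∃ b' : Fin (n₂ + 1) → ℂ, ∃ c' : Fin (n₃ + 1) → ℂ,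
      a' 0 = 1 ∧ b' 0 = 1 ∧
      (∀ t ∈ Ω, Q t = a' t.1 * b' t.2.1 * c' t.2.2) ∧
      (∃ t ∈ Ω, a' t.1 ≠ a t.1 ∨ b' t.2.1 ≠ b t.2.1 ∨ c' t.2.2 ≠ c t.2.2)) ↔
    (∃ α : Fin (n₁ + 1) → ℝ, ∃ β : Fin (n₂ + 1) → ℝ, ∃ γ : Fin (n₃ + 1) → ℝ,
      ∃ σ : Fin (n₁ + 1) × Fin (n₂ + 1) × Fin (n₃ + 1) → ℝ,
      α 0 = 0 ∧ β 0 = 0 ∧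
      (∀ t ∈ Ω, σ t = 0 ∨ σ t = 2 * π ∨ σ t = 4 * π) ∧
      (∀ t ∈ Ω, α t.1 + β t.2.1 + γ t.2.2 = σ t) ∧
      (∀ t ∈ Ω, α t.1 ∈ Set.Ico 0 (2 * π) ∧ β t.2.1 ∈ Set.Ico 0 (2 * π) ∧
        γ t.2.2 ∈ Set.Ico 0 (2 * π)) ∧
      (∃ t ∈ Ω, (¬ ∃ m : ℤ, α t.1 = 2 * π * m) ∨ (¬ ∃ m : ℤ, β t.2.1 = 2 * π * m) ∨
        (¬ ∃ m : ℤ, γ t.2.2 = 2 * π * m))) :=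
  complex_not_unique_iff_phase_system_general n₁ n₂ n₃ Ω Q a b c hnz ha0 hb0 hsol hA
end

section
/- If there exist α_i, β_j, γ_k ∈ ℝ with α₁ = β₁ = 0 such that α_i + β_j + γ_k ∈ 2πℤ for all (i,j,k) ∈ Ω, and some α_i, β_j, or γ_k (for an index appearing in Ω) is not in 2πℤ, then any complex rank-one completion a_i b_j c_k = Q_{ijk} with a₁ = b₁ = 1 and nonzero components admits a second distinct completion given by a'_i = a_i e^{𝔦α_i}, b'_j = b_j e^{𝔦β_j}, c'_k = c_k e^{𝔦γ_k}. -/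
open Real Complex

lemma exp_I_eq_one_iff' (θ : ℝ) :
    Complex.exp (Complex.I * θ) = 1 ↔ ∃ m : ℤ, θ = 2 * π * m := by
  rw [Complex.exp_eq_one_iff]
  constructor
  · rintro ⟨n, h⟩
    refine ⟨n, ?_⟩
    have h' : Complex.I * θ = Complex.I * (2 * π * n) := by rw [h]; ring
    have := mul_left_cancel₀ Complex.I_ne_zero h'
    exact_mod_cast this
  · rintro ⟨m, h⟩
    exact ⟨m, by rw [h]; push_cast; ring⟩

/-- A nontrivial phase solution with sums in `2πℤ` produces a second distinct
complex rank-one completion. -/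
theorem second_completion_of_phases
    (n₁ n₂ n₃ : ℕ)
    (Ω : Finset (Fin (n₁ + 1) × Fin (n₂ + 1) × Fin (n₃ + 1)))
    (Q : Fin (n₁ + 1) × Fin (n₂ + 1) × Fin (n₃ + 1) → ℂ)
    (hQ : ∀ t ∈ Ω, Q t ≠ 0)
    (α : Fin (n₁ + 1) → ℝ) (β : Fin (n₂ + 1) → ℝ) (γ : Fin (n₃ + 1) → ℝ)
    (hα0 : α 0 = 0) (hβ0 : β 0 = 0)
    (hsum : ∀ t ∈ Ω, ∃ m : ℤ, α t.1 + β t.2.1 + γ t.2.2 = 2 * π * m)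
    (hnontriv : ∃ t ∈ Ω, (¬ ∃ m : ℤ, α t.1 = 2 * π * m) ∨
      (¬ ∃ m : ℤ, β t.2.1 = 2 * π * m) ∨ (¬ ∃ m : ℤ, γ t.2.2 = 2 * π * m))
    (a : Fin (n₁ + 1) → ℂ) (b : Fin (n₂ + 1) → ℂ) (c : Fin (n₃ + 1) → ℂ)
    (hnz : ∀ t ∈ Ω, a t.1 ≠ 0 ∧ b t.2.1 ≠ 0 ∧ c t.2.2 ≠ 0)
    (ha0 : a 0 = 1) (hb0 : b 0 = 1)
    (hsol : ∀ t ∈ Ω, Q t = a t.1 * b t.2.1 * c t.2.2) :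
    (∀ t ∈ Ω, Q t = (a t.1 * Complex.exp (Complex.I * α t.1)) *
      (b t.2.1 * Complex.exp (Complex.I * β t.2.1)) *
      (c t.2.2 * Complex.exp (Complex.I * γ t.2.2))) ∧
    (a 0 * Complex.exp (Complex.I * α 0) = 1) ∧
    (b 0 * Complex.exp (Complex.I * β 0) = 1) ∧
    (∃ t ∈ Ω, a t.1 * Complex.exp (Complex.I * α t.1) ≠ a t.1 ∨
      b t.2.1 * Complex.exp (Complex.I * β t.2.1) ≠ b t.2.1 ∨
      c t.2.2 * Complex.exp (Complex.I * γ t.2.2) ≠ c t.2.2) := by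
  refine ⟨?_, ?_, ?_, ?_⟩
  · intro t ht
    obtain ⟨m, hm⟩ := hsum t ht
    have hexp : Complex.exp (Complex.I * α t.1) * Complex.exp (Complex.I * β t.2.1) *
        Complex.exp (Complex.I * γ t.2.2) = 1 := by
      rw [← Complex.exp_add, ← Complex.exp_add]
      have : Complex.I * (α t.1) + Complex.I * (β t.2.1) + Complex.I * (γ t.2.2)
          = Complex.I * ((α t.1 + β t.2.1 + γ t.2.2 : ℝ) : ℂ) := by push_cast; ring
      rw [this, hm]
      exact (exp_I_eq_one_iff' _).2 ⟨m, rfl⟩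
    calc Q t = a t.1 * b t.2.1 * c t.2.2 := hsol t ht
      _ = (a t.1 * b t.2.1 * c t.2.2) *
          (Complex.exp (Complex.I * α t.1) * Complex.exp (Complex.I * β t.2.1) *
            Complex.exp (Complex.I * γ t.2.2)) := by rw [hexp, mul_one]
      _ = _ := by ring
  · simp [ha0, hα0]
  · simp [hb0, hβ0]
  · obtain ⟨t, ht, hcase⟩ := hnontriv
    refine ⟨t, ht, ?_⟩
    obtain ⟨hna, hnb, hnc⟩ := hnz t ht
    rcases hcase with h | h | h
    · left
      intro hc
      exact h ((exp_I_eq_one_iff' _).1 (mul_left_cancel₀ hna (hc.trans (mul_one _).symm)))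
    · right; left
      intro hc
      exact h ((exp_I_eq_one_iff' _).1 (mul_left_cancel₀ hnb (hc.trans (mul_one _).symm)))
    · right; right
      intro hc
      exact h ((exp_I_eq_one_iff' _).1 (mul_left_cancel₀ hnc (hc.trans (mul_one _).symm)))
end

section
/- For the 3×3×3 tensor with Ω = {(1,1,1),(1,2,1),(2,1,1),(1,1,2),(3,3,1),(1,3,3),(3,1,3)} and all observed values equal to 1, there are exactly two real rank-one completions with a₁ = b₁ = 1: the all-ones solution a = b = c = (1,1,1), and the solution a = b = c = (1,1,−1). -/
/-!
Once `a₀ = b₀ = 1`, the observations through the first slices pin `c₀ = b₁ = a₁ = c₁ = 1`.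
The remaining three observations say that `a₂, b₂, c₂` multiply pairwise to `1`; uniqueness of
inverses makes them equal, and then `a₂² = 1` leaves exactly the two signs.
-/

theorem eq_and_eq_of_pairwise_mul_eq_one {M : Type*} [CommMonoid M] {x y z : M}
    (hxy : x * y = 1) (hyz : y * z = 1) (hxz : x * z = 1) : y = x ∧ z = x := by
  have hzx : z = x := (left_inv_eq_right_inv hxy hyz).symm
  exact ⟨left_inv_eq_right_inv (mul_comm x y ▸ hxy) (hzx ▸ hxz), hzx⟩

theorem Fin.three_eq_vec_iff {α : Type*} (v : Fin 3 → α) (p q r : α) :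
    v = ![p, q, r] ↔ v 0 = p ∧ v 1 = q ∧ v 2 = r := by
  constructor
  · rintro rfl
    simp
  · rintro ⟨h0, h1, h2⟩
    ext i
    fin_cases i <;> simpa

/-- Table 2: exactly two real rank-one completions, the all-ones one and
`a = b = c = (1,1,−1)`. -/
theorem table2_exactly_two_real_completions
    (a b c : Fin 3 → ℝ) :
    (a 0 = 1 ∧ b 0 = 1 ∧
      a 0 * b 0 * c 0 = 1 ∧
      a 0 * b 1 * c 0 = 1 ∧
      a 1 * b 0 * c 0 = 1 ∧
      a 0 * b 0 * c 1 = 1 ∧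
      a 2 * b 2 * c 0 = 1 ∧
      a 0 * b 2 * c 2 = 1 ∧
      a 2 * b 0 * c 2 = 1) ↔
    ((a = ![1, 1, 1] ∧ b = ![1, 1, 1] ∧ c = ![1, 1, 1]) ∨
      (a = ![1, 1, -1] ∧ b = ![1, 1, -1] ∧ c = ![1, 1, -1])) := by
  simp only [Fin.three_eq_vec_iff]
  constructor
  · rintro ⟨ha0, hb0, h000, h010, h100, h001, h220, h022, h202⟩
    simp only [ha0, hb0, one_mul, mul_one] at h000 h010 h100 h001 h022 h202
    simp only [h000, mul_one] at h010 h100 h220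
    obtain ⟨hb2, hc2⟩ := eq_and_eq_of_pairwise_mul_eq_one h220 h022 h202
    have ha2 : a 2 * a 2 = 1 := hb2 ▸ h220
    rcases mul_self_eq_one_iff.mp ha2 with ha2 | ha2
    · exact .inl ⟨⟨ha0, h100, ha2⟩, ⟨hb0, h010, hb2.trans ha2⟩, ⟨h000, h001, hc2.trans ha2⟩⟩
    · exact .inr ⟨⟨ha0, h100, ha2⟩, ⟨hb0, h010, hb2.trans ha2⟩, ⟨h000, h001, hc2.trans ha2⟩⟩
  · rintro (⟨⟨ha0, ha1, ha2⟩, ⟨hb0, hb1, hb2⟩, ⟨hc0, hc1, hc2⟩⟩ |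
        ⟨⟨ha0, ha1, ha2⟩, ⟨hb0, hb1, hb2⟩, ⟨hc0, hc1, hc2⟩⟩) <;>
      simp only [ha0, ha1, ha2, hb0, hb1, hb2, hc0, hc1, hc2] <;> norm_num
end

section
/- For the 3×3×3 tensor with Ω = {(1,1,1),(2,1,1),(3,2,1),(3,1,2),(1,3,2),(1,2,3),(3,3,3)} and all observed values equal to 1, the real rank-one completion with a₁ = b₁ = 1 is unique (namely a = b = c = (1,1,1)), but over ℂ there exists a distinct completion, e.g. a = (1,1,ω), b = (1,ω²,ω), c = (1,ω²,ω) where ω = e^{2π𝔦/3}. -/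
open Real Complex

/-- Table 3: the real rank-one completion is unique (all ones), but over `ℂ`
there is a distinct completion built from a primitive cube root of unity. -/
theorem table3_real_unique_complex_not
    : (∀ a b c : Fin 3 → ℝ,
        a 0 = 1 → b 0 = 1 →
        a 0 * b 0 * c 0 = 1 →
        a 1 * b 0 * c 0 = 1 →
        a 2 * b 1 * c 0 = 1 →
        a 2 * b 0 * c 1 = 1 →
        a 0 * b 2 * c 1 = 1 →
        a 0 * b 1 * c 2 = 1 →
        a 2 * b 2 * c 2 = 1 →
        (∀ i, a i = 1) ∧ (∀ j, b j = 1) ∧ (∀ k, c k = 1)) ∧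
      (let ω : ℂ := Complex.exp (2 * Real.pi * Complex.I / 3);
        let a : Fin 3 → ℂ := ![1, 1, ω];
        let b : Fin 3 → ℂ := ![1, ω ^ 2, ω];
        let c : Fin 3 → ℂ := ![1, ω ^ 2, ω];
        a 0 = 1 ∧ b 0 = 1 ∧
        a 0 * b 0 * c 0 = 1 ∧
        a 1 * b 0 * c 0 = 1 ∧
        a 2 * b 1 * c 0 = 1 ∧
        a 2 * b 0 * c 1 = 1 ∧
        a 0 * b 2 * c 1 = 1 ∧
        a 0 * b 1 * c 2 = 1 ∧
        a 2 * b 2 * c 2 = 1 ∧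
        a 2 ≠ 1) := by
  constructor
  · intro a b c ha0 hb0 e1 e2 e3 e4 e5 e6 e7
    rw [ha0] at e1 e5 e6
    rw [hb0] at e1 e2
    have hc0 : c 0 = 1 := by linarith
    rw [hc0] at e2
    have ha1 : a 1 = 1 := by linarith
    rw [hc0] at e3
    rw [hb0] at e4
    -- e3 : a2 * b1 * 1 = 1, e4 : a2 * 1 * c1 = 1,
    -- e5 : 1 * b2 * c1 = 1, e6 : 1 * b1 * c2 = 1, e7 : a2*b2*c2 = 1
    have h1 : a 2 * b 1 = 1 := by linarith
    have h2 : a 2 * c 1 = 1 := by linarith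
    have h3 : b 2 * c 1 = 1 := by linarith
    have h4 : b 1 * c 2 = 1 := by linarith
    have ha2ne : a 2 ≠ 0 := by intro h; rw [h] at h1; simp at h1
    have hb1ne : b 1 ≠ 0 := by intro h; rw [h] at h4; simp at h4
    have hc1ne : c 1 ≠ 0 := by intro h; rw [h] at h2; simp at h2
    have hb2a : b 2 = a 2 := mul_right_cancel₀ hc1ne (by rw [h3, h2])
    have hc2a : c 2 = a 2 := mul_left_cancel₀ hb1ne (by rw [h4]; linear_combination -h1)
    rw [hb2a, hc2a] at e7
    have cube : a 2 ^ 3 = 1 := by linear_combination e7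
    have factor : (a 2 - 1) * ((a 2) ^ 2 + a 2 + 1) = 0 := by ring_nf; nlinarith [cube]
    have pos : (a 2) ^ 2 + a 2 + 1 > 0 := by nlinarith [sq_nonneg (2 * a 2 + 1)]
    have ha2 : a 2 = 1 := by
      rcases mul_eq_zero.mp factor with h | h
      · linarith
      · linarith
    rw [ha2] at e3 e4
    have hb1 : b 1 = 1 := by linarith
    have hc1 : c 1 = 1 := by linarith
    rw [hc1] at e5
    have hb2 : b 2 = 1 := by linarith
    rw [hb1] at e6
    have hc2 : c 2 = 1 := by linarith
    refine ⟨fun i => ?_, fun j => ?_, fun k => ?_⟩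
    · fin_cases i <;> assumption
    · fin_cases j <;> assumption
    · fin_cases k <;> assumption
  · intro ω a b c
    have hω3 : ω ^ 3 = 1 := by
      show Complex.exp (2 * Real.pi * Complex.I / 3) ^ 3 = 1
      rw [← Complex.exp_nat_mul]
      rw [show ((3:ℕ):ℂ) * (2 * Real.pi * Complex.I / 3) = 2 * Real.pi * Complex.I by push_cast; ring]
      exact Complex.exp_two_pi_mul_I
    have hω1 : ω ≠ 1 := by
      intro h
      have hre : ω.re = Real.cos (2 * Real.pi / 3) := by
        show (Complex.exp (2 * Real.pi * Complex.I / 3)).re = _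
        rw [show (2 * (Real.pi : ℂ) * Complex.I / 3) = ((2 * Real.pi / 3 : ℝ) : ℂ) * Complex.I by
          push_cast; ring]
        exact Complex.exp_ofReal_mul_I_re _
      have hcos : Real.cos (2 * Real.pi / 3) = -(1 / 2) := by
        rw [show 2 * Real.pi / 3 = Real.pi - Real.pi / 3 by ring, Real.cos_pi_sub,
          Real.cos_pi_div_three]
      rw [h] at hre
      simp [hcos] at hre
      norm_num at hre
    refine ⟨rfl, rfl, ?_, ?_, ?_, ?_, ?_, ?_, ?_, ?_⟩ <;>
      simp only [a, b, c, Matrix.cons_val_zero, Matrix.cons_val_one, Matrix.head_cons,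
        Matrix.cons_val_two, Matrix.tail_cons]
    · ring
    · ring
    · linear_combination hω3
    · linear_combination hω3
    · linear_combination hω3
    · linear_combination hω3
    · linear_combination hω3
    · exact hω1
end

section
/- (Matrix case.) Let Ω ⊆ [n₁]×[n₂] and Q_{ij} ≠ 0 real for (i,j) ∈ Ω. Suppose the homogeneous system x_i + y_j = 0, (i,j) ∈ Ω, with x₁ = 0 has only the zero solution. If a rank-one completion Q_{ij} = a_i b_j with a₁ = 1 exists over ℝ, then it is globally unique: any a', b' with a'₁ = 1 and Q_{ij} = a'_i b'_j for all (i,j) ∈ Ω satisfies a'_i = a_i and b'_j = b_j for all indices i, j appearing in Ω. -/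
/-!
Dividing one normalized completion by the other gives ratios `u i = a' i / a i`, `v j = b' j / b j`
with `u 0 = 1` and `u i * v j = 1` on `Ω`. Taking logarithms turns this into a solution of the
homogeneous additive system, so `log |u| = 0`, i.e. every ratio is `±1`. Then `v j = u i` on `Ω`,
so `u - 1` and `1 - v` solve the additive system once more, which forces all ratios to be `1`.
-/

variable {ι κ : Type*}

def AddRigid (Ω : Set (ι × κ)) (i₀ : ι) : Prop :=
  ∀ x : ι → ℝ, ∀ y : κ → ℝ, x i₀ = 0 → (∀ t ∈ Ω, x t.1 + y t.2 = 0) →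
    ∀ t ∈ Ω, x t.1 = 0 ∧ y t.2 = 0

namespace AddRigid

variable {Ω : Set (ι × κ)} {i₀ : ι} {u : ι → ℝ} {v : κ → ℝ}

theorem eq_one_or_eq_neg_one (hΩ : AddRigid Ω i₀) (hu₀ : u i₀ = 1)
    (huv : ∀ t ∈ Ω, u t.1 * v t.2 = 1) {t : ι × κ} (ht : t ∈ Ω) :
    u t.1 = 1 ∨ u t.1 = -1 := by
  have hlog : ∀ s ∈ Ω, Real.log (u s.1) + Real.log (v s.2) = 0 := fun s hs => by
    have := huv s hs
    rw [← Real.log_mul (left_ne_zero_of_mul_eq_one this) (right_ne_zero_of_mul_eq_one this),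
      this, Real.log_one]
  have hut := (hΩ (fun i => Real.log (u i)) (fun j => Real.log (v j)) (by simp [hu₀]) hlog t ht).1
  rcases Real.log_eq_zero.1 hut with h | h | h
  · exact absurd (huv t ht) (by simp [h])
  · exact .inl h
  · exact .inr h

theorem eq_one_of_mul_eq_one (hΩ : AddRigid Ω i₀) (hu₀ : u i₀ = 1)
    (huv : ∀ t ∈ Ω, u t.1 * v t.2 = 1) {t : ι × κ} (ht : t ∈ Ω) :
    u t.1 = 1 ∧ v t.2 = 1 := by
  have hvu : ∀ s ∈ Ω, u s.1 - 1 + (1 - v s.2) = 0 := fun s hs => by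
    have h := huv s hs
    rcases hΩ.eq_one_or_eq_neg_one hu₀ huv hs with hu | hu <;> rw [hu] at h ⊢ <;> linarith
  have hsign := hΩ (fun i => u i - 1) (fun j => 1 - v j) (by simp [hu₀]) hvu t ht
  constructor <;> linarith [hsign.1, hsign.2]

end AddRigid

/-- Matrix case over `ℝ`: nondegeneracy of the homogeneous system implies
global uniqueness of the normalized rank-one completion. -/
theorem matrix_real_global_uniqueness
    (n₁ n₂ : ℕ)
    (Ω : Finset (Fin (n₁ + 1) × Fin (n₂ + 1)))
    (Q : Fin (n₁ + 1) × Fin (n₂ + 1) → ℝ)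
    (hQ : ∀ t ∈ Ω, Q t ≠ 0)
    (hA : ∀ x : Fin (n₁ + 1) → ℝ, ∀ y : Fin (n₂ + 1) → ℝ,
      x 0 = 0 → (∀ t ∈ Ω, x t.1 + y t.2 = 0) →
      ∀ t ∈ Ω, x t.1 = 0 ∧ y t.2 = 0)
    (a : Fin (n₁ + 1) → ℝ) (b : Fin (n₂ + 1) → ℝ)
    (ha0 : a 0 = 1)
    (hsol : ∀ t ∈ Ω, Q t = a t.1 * b t.2) :
    ∀ a' : Fin (n₁ + 1) → ℝ, ∀ b' : Fin (n₂ + 1) → ℝ,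
      a' 0 = 1 → (∀ t ∈ Ω, Q t = a' t.1 * b' t.2) →
      ∀ t ∈ Ω, a' t.1 = a t.1 ∧ b' t.2 = b t.2 := by
  intro a' b' ha'0 hsol' t ht
  have hab : ∀ s ∈ Ω, a s.1 ≠ 0 ∧ b s.2 ≠ 0 := fun s hs =>
    mul_ne_zero_iff.1 (hsol s hs ▸ hQ s hs)
  have hΩ : AddRigid (Ω : Set (Fin (n₁ + 1) × Fin (n₂ + 1))) 0 := hA
  have hratio : ∀ s ∈ Ω, a' s.1 / a s.1 * (b' s.2 / b s.2) = 1 := fun s hs => by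
    rw [div_mul_div_comm, ← hsol' s hs, hsol s hs, div_self (mul_ne_zero_iff.2 (hab s hs))]
  have hone := hΩ.eq_one_of_mul_eq_one (u := fun i => a' i / a i)
    (v := fun j => b' j / b j) (by simp [ha0, ha'0]) (fun s hs => hratio s hs) ht
  exact ⟨(div_eq_one_iff_eq (hab t ht).1).1 hone.1, (div_eq_one_iff_eq (hab t ht).2).1 hone.2⟩
end

section
/- (Matrix case over ℂ.) Let Ω ⊆ [n₁]×[n₂] and Q_{ij} ≠ 0 complex for (i,j) ∈ Ω. If the homogeneous system x_i + y_j = 0, (i,j) ∈ Ω, with x₁ = 0 has only the zero real solution, then a complex rank-one completion Q_{ij} = a_i b_j with a₁ = 1, if it exists, is unique. -/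
/-! For two normalized completions the ratios `r i = a' i / a i`, `s j = b' j / b j` satisfy
`r i₀ = 1` and `r i * s j = 1` on `Ω`, so `r i = 1 ↔ s j = 1` on `Ω`. The indicator of `{r ≠ 1}`
together with minus the indicator of `{s ≠ 1}` is then a real solution of the homogeneous system,
hence vanishes on `Ω`. -/

variable {ι κ : Type*}

def RankOneNondegenerate (Ω : Finset (ι × κ)) (i₀ : ι) : Prop :=
  ∀ x : ι → ℝ, ∀ y : κ → ℝ, x i₀ = 0 → (∀ t ∈ Ω, x t.1 + y t.2 = 0) →
    ∀ t ∈ Ω, x t.1 = 0 ∧ y t.2 = 0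

namespace RankOneNondegenerate

variable {Ω : Finset (ι × κ)} {i₀ : ι}

theorem not_and_not_of_iff (h : RankOneNondegenerate Ω i₀) {p : ι → Prop} {q : κ → Prop}
    (hp : ¬p i₀) (hpq : ∀ t ∈ Ω, p t.1 ↔ q t.2) : ∀ t ∈ Ω, ¬p t.1 ∧ ¬q t.2 := by
  classical
  have hind := h (fun i => if p i then 1 else 0) (fun j => if q j then -1 else 0)
    (by simp [hp]) (fun t ht => by by_cases hq : q t.2 <;> simp [hpq t ht, hq])
  intro t ht
  simpa using hind t ht

theorem eq_one_of_mul_eq_one {M : Type*} [MulOneClass M] (h : RankOneNondegenerate Ω i₀)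
    {r : ι → M} {s : κ → M} (hr : r i₀ = 1) (hrs : ∀ t ∈ Ω, r t.1 * s t.2 = 1) :
    ∀ t ∈ Ω, r t.1 = 1 ∧ s t.2 = 1 := by
  have hiff : ∀ t ∈ Ω, r t.1 ≠ 1 ↔ s t.2 ≠ 1 := fun t ht => by
    refine not_congr ⟨fun h1 => ?_, fun h1 => ?_⟩
    · simpa [h1] using hrs t ht
    · simpa [h1] using hrs t ht
  simpa using h.not_and_not_of_iff (p := (r · ≠ 1)) (q := (s · ≠ 1)) (by simpa) hiff

theorem eq_of_mul_eq_mul {K : Type*} [Field K] (h : RankOneNondegenerate Ω i₀)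
    {a a' : ι → K} {b b' : κ → K} (ha : a i₀ = 1) (ha' : a' i₀ = 1)
    (hab : ∀ t ∈ Ω, a t.1 * b t.2 ≠ 0) (heq : ∀ t ∈ Ω, a' t.1 * b' t.2 = a t.1 * b t.2) :
    ∀ t ∈ Ω, a' t.1 = a t.1 ∧ b' t.2 = b t.2 := by
  have hratio : ∀ t ∈ Ω, a' t.1 / a t.1 * (b' t.2 / b t.2) = 1 := fun t ht => by
    rw [div_mul_div_comm, heq t ht, div_self (hab t ht)]
  intro t ht
  obtain ⟨ha_ne, hb_ne⟩ := mul_ne_zero_iff.mp (hab t ht)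
  obtain ⟨hr, hs⟩ := h.eq_one_of_mul_eq_one (r := fun i => a' i / a i) (s := fun j => b' j / b j)
    (by simp [ha, ha']) hratio t ht
  exact ⟨(div_eq_one_iff_eq ha_ne).mp hr, (div_eq_one_iff_eq hb_ne).mp hs⟩

end RankOneNondegenerate

/-- Matrix case over `ℂ`: nondegeneracy of the real homogeneous system implies
there is at most one normalized complex rank-one completion. -/
theorem matrix_complex_uniqueness
    (n₁ n₂ : ℕ)
    (Ω : Finset (Fin (n₁ + 1) × Fin (n₂ + 1)))
    (Q : Fin (n₁ + 1) × Fin (n₂ + 1) → ℂ)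
    (hQ : ∀ t ∈ Ω, Q t ≠ 0)
    (hA : ∀ x : Fin (n₁ + 1) → ℝ, ∀ y : Fin (n₂ + 1) → ℝ,
      x 0 = 0 → (∀ t ∈ Ω, x t.1 + y t.2 = 0) →
      ∀ t ∈ Ω, x t.1 = 0 ∧ y t.2 = 0) :
    ∀ a a' : Fin (n₁ + 1) → ℂ, ∀ b b' : Fin (n₂ + 1) → ℂ,
      a 0 = 1 → (∀ t ∈ Ω, Q t = a t.1 * b t.2) →
      a' 0 = 1 → (∀ t ∈ Ω, Q t = a' t.1 * b' t.2) →
      ∀ t ∈ Ω, a' t.1 = a t.1 ∧ b' t.2 = b t.2 := by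
  intro a a' b b' ha hab ha' hab'
  exact RankOneNondegenerate.eq_of_mul_eq_mul hA ha ha' (fun t ht => hab t ht ▸ hQ t ht)
    (fun t ht => (hab' t ht).symm.trans (hab t ht))
end
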